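/- Let t ≥ 2 and ℓ ≥ 1 be integers. There exists n₀ such that for all n ≥ n₀, if G is an extremal graph with respect to spex(n, tC_{2ℓ+1}), then ρ(G) ≥ n/2 + (t−1) − t²/(2n). -/

import Mathlib

/-!
The graph `K_{t-1} ∨ K_{⌈(n-t+1)/2⌉,⌊(n-t+1)/2⌋}` contains no `t` disjoint odd cycles: deleting
the `t - 1` clique vertices leaves a bipartite graph, so every odd cycle meets the clique. Hence
`spex(n, tC_{2ℓ+1})` is at least its spectral radius, which by the Rayleigh quotient of the
all-ones vector is at least its average degree; a direct count shows this average degree equals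
`n/2 + (t-1) - t²/(2n)` when `n - t + 1` is odd and exceeds it otherwise.
-/

open SimpleGraph
open scoped Classical

/-- The largest real eigenvalue of the adjacency matrix of `G`
(the spectral radius of a graph). -/
noncomputable def specRad {V : Type} [Fintype V] (G : SimpleGraph V) : ℝ :=
  sSup {μ : ℝ | ∃ x : V → ℝ, x ≠ 0 ∧ (G.adjMatrix ℝ).mulVec x = μ • x}

/-- `G` contains a (not necessarily induced) copy of `F` as a subgraph. -/
def ContainsCopy {α β : Type} (F : SimpleGraph α) (G : SimpleGraph β) : Prop :=
  ∃ f : α → β, Function.Injective f ∧ ∀ a b, F.Adj a b → G.Adj (f a) (f b)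

/-- The Turán number `ex(n, F)`. -/
noncomputable def exNum {α : Type} (n : ℕ) (F : SimpleGraph α) : ℕ :=
  sSup {m : ℕ | ∃ G : SimpleGraph (Fin n), ¬ ContainsCopy F G ∧ G.edgeSet.ncard = m}

/-- The spectral Turán number `spex(n, F)`. -/
noncomputable def spex {α : Type} (n : ℕ) (F : SimpleGraph α) : ℝ :=
  sSup {r : ℝ | ∃ G : SimpleGraph (Fin n), ¬ ContainsCopy F G ∧ specRad G = r}

/-- `t` vertex-disjoint copies of `F`. -/
def copies {α : Type} (t : ℕ) (F : SimpleGraph α) : SimpleGraph (Fin t × α) where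
  Adj x y := x.1 = y.1 ∧ F.Adj x.2 y.2
  symm := by constructor; intro _ _ h; exact ⟨h.1.symm, h.2.symm⟩
  loopless := by constructor; intro x h; exact F.irrefl h.2

/-- The join `G + H` of two graphs. -/
def joinG {α β : Type} (G : SimpleGraph α) (H : SimpleGraph β) : SimpleGraph (α ⊕ β) where
  Adj x y := match x, y with
    | Sum.inl a, Sum.inl b => G.Adj a b
    | Sum.inr a, Sum.inr b => H.Adj a b
    | Sum.inl _, Sum.inr _ => True
    | Sum.inr _, Sum.inl _ => True
  symm := by
    constructor
    rintro (a|a) (b|b) h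
    · exact G.adj_symm h
    · trivial
    · trivial
    · exact H.adj_symm h
  loopless := by
    constructor
    rintro (a|a) h
    · exact G.irrefl h
    · exact H.irrefl h

/-- `S_{n,ℓ}^{+}`: the join of `K_ℓ` with an independent set of `n - ℓ` vertices,
plus one edge inside the independent set. -/
def sPlus (n ℓ : ℕ) : SimpleGraph (Fin n) :=
  SimpleGraph.fromRel (fun i j => (i : ℕ) < ℓ ∨ ((i : ℕ) ≤ ℓ + 1 ∧ (j : ℕ) ≤ ℓ + 1))

/-- `S_{n,ℓ}^{++}`: the join of `K_ℓ` with an independent set of `n - ℓ` vertices,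
plus a maximum matching inside the independent set. -/
def sPP (n ℓ : ℕ) : SimpleGraph (Fin n) :=
  SimpleGraph.fromRel (fun i j => (i : ℕ) < ℓ ∨ ((i : ℕ) - ℓ) / 2 = ((j : ℕ) - ℓ) / 2)

/-- The number of edges inside a vertex subset `A`. -/
noncomputable def eIn {n : ℕ} (G : SimpleGraph (Fin n)) (A : Finset (Fin n)) : ℕ :=
  (G.induce (A : Set (Fin n))).edgeSet.ncard

/-- The number of edges between two disjoint vertex subsets `A` and `B`. -/
noncomputable def eCross {n : ℕ} (G : SimpleGraph (Fin n)) (A B : Finset (Fin n)) : ℕ :=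
  Set.ncard {p : Fin n × Fin n | p.1 ∈ A ∧ p.2 ∈ B ∧ G.Adj p.1 p.2}

open Finset

section SpectralRadius

variable {V : Type} [Fintype V]

lemma finite_adjMatrix_eigenvalues (G : SimpleGraph V) :
    {μ : ℝ | ∃ x : V → ℝ, x ≠ 0 ∧ (G.adjMatrix ℝ).mulVec x = μ • x}.Finite := by
  refine (Module.End.finite_hasEigenvalue (Matrix.toLin' (G.adjMatrix ℝ))).subset ?_
  rintro μ ⟨x, hx, hAx⟩
  exact Module.End.hasEigenvalue_of_hasEigenvector
    ⟨Module.End.mem_eigenspace_iff.mpr (by rwa [Matrix.toLin'_apply]), hx⟩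

lemma le_specRad {G : SimpleGraph V} {μ : ℝ} {x : V → ℝ} (hx : x ≠ 0)
    (hAx : (G.adjMatrix ℝ).mulVec x = μ • x) : μ ≤ specRad G :=
  le_csSup (finite_adjMatrix_eigenvalues G).bddAbove ⟨x, hx, hAx⟩

lemma sum_adjMatrix_div_card_le_specRad [Nonempty V] (G : SimpleGraph V) :
    (∑ i, ∑ j, G.adjMatrix ℝ i j) / Fintype.card V ≤ specRad G := by
  set T := Matrix.toEuclideanLin (G.adjMatrix ℝ)
  have hT : T.IsSymmetric :=
    Matrix.isSymmetric_toEuclideanLin_iff.mpr (G.isHermitian_adjMatrix ℝ)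
  set R : {x : EuclideanSpace ℝ V // x ≠ 0} → ℝ :=
    fun x => RCLike.re (inner ℝ (T x) x) / ‖(x : EuclideanSpace ℝ V)‖ ^ 2
  have hR : BddAbove (Set.range R) := by
    refine ⟨‖LinearMap.toContinuousLinearMap T‖, ?_⟩
    rintro _ ⟨x, rfl⟩
    exact (le_abs_self _).trans ((LinearMap.toContinuousLinearMap T).rayleighQuotient_le_norm x)
  obtain ⟨v, hv⟩ := (hT.hasEigenvalue_iSup_of_finiteDimensional).exists_hasEigenvector
  have hspec : ⨆ x, R x ≤ specRad G := by
    refine le_specRad (x := v.ofLp) (by simpa using hv.2) ?_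
    exact congrArg WithLp.ofLp (Module.End.mem_eigenspace_iff.mp hv.1)
  have hone : (WithLp.toLp 2 (fun _ => (1 : ℝ)) : EuclideanSpace ℝ V) ≠ 0 := by
    intro h
    simpa using congrFun (congrArg WithLp.ofLp h) (Classical.arbitrary V)
  refine le_trans ?_ ((le_ciSup hR ⟨_, hone⟩).trans hspec)
  simp [R, T, EuclideanSpace.norm_eq, PiLp.inner_apply, Matrix.mulVec, dotProduct]

end SpectralRadius

lemma specRad_le_spex {α : Type} {n : ℕ} {F : SimpleGraph α} {H : SimpleGraph (Fin n)}
    (hH : ¬ ContainsCopy F H) : specRad H ≤ spex n F := by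
  refine le_csSup ((Set.finite_range fun G : SimpleGraph (Fin n) => specRad G).bddAbove.mono ?_)
    ⟨H, hH, rfl⟩
  rintro _ ⟨G, -, rfl⟩
  exact ⟨G, rfl⟩

lemma containsCopy_of_isEmpty {α β : Type} [IsEmpty α] (F : SimpleGraph α) (G : SimpleGraph β) :
    ContainsCopy F G :=
  ⟨isEmptyElim, fun a => isEmptyElim a, fun a => isEmptyElim a⟩

lemma not_colorable_two_cycleGraph {l : ℕ} (hl : 1 ≤ l) : ¬ (cycleGraph (2 * l + 1)).Colorable 2 := by
  intro h
  have := h.chromaticNumber_le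
  rw [chromaticNumber_cycleGraph_of_odd _ (by omega) (odd_two_mul_add_one l)] at this
  norm_num at this

/-- The join of a clique on the vertices labelled `none` with the complete bipartite graph
between the vertices labelled `some true` and those labelled `some false`. -/
def apexBipartite {V : Type} (f : V → Option Bool) : SimpleGraph V where
  Adj i j := i ≠ j ∧ (f i = f j → f i = none)
  symm := ⟨fun _ _ h => ⟨h.1.symm, fun hji => hji ▸ h.2 hji.symm⟩⟩
  loopless := ⟨fun _ h => h.1 rfl⟩

@[simp]
lemma apexBipartite_adj {V : Type} {f : V → Option Bool} {i j : V} :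
    (apexBipartite f).Adj i j ↔ i ≠ j ∧ (f i = f j → f i = none) := Iff.rfl

lemma not_containsCopy_copies_apexBipartite {V : Type} [Fintype V] {t l : ℕ} (hl : 1 ≤ l)
    (f : V → Option Bool) (hf : #{v | f v = none} < t) :
    ¬ ContainsCopy (copies t (cycleGraph (2 * l + 1))) (apexBipartite f) := by
  rintro ⟨φ, hφ, hadj⟩
  -- off the apex set the side labels would properly 2-colour the `k`-th cycle
  have hapex : ∀ k : Fin t, ∃ v, f (φ (k, v)) = none := by
    intro k
    by_contra! h
    refine not_colorable_two_cycleGraph hl ?_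
    refine (Coloring.mk (fun v => (f (φ (k, v))).getD false) fun {u v} huv => ?_).colorable
    have hsplit := (hadj (k, u) (k, v) ⟨rfl, huv⟩).2
    obtain ⟨a, ha⟩ := Option.ne_none_iff_exists'.mp (h u)
    obtain ⟨b, hb⟩ := Option.ne_none_iff_exists'.mp (h v)
    simp only [ha, hb, Option.getD_some, Option.some_inj, reduceCtorEq, imp_false] at hsplit ⊢
    exact hsplit
  choose v hv using hapex
  have hcard := card_le_card_of_injOn (fun k => φ (k, v k)) (s := univ) (t := {v | f v = none})
    (fun k _ => by simpa using hv k) (fun k₁ _ k₂ _ h => (Prod.ext_iff.mp (hφ h)).1)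
  simp only [card_univ, Fintype.card_fin] at hcard
  omega

lemma sum_adjMatrix_apexBipartite {V : Type} [Fintype V] (f : V → Option Bool) :
    ∑ i, ∑ j, (apexBipartite f).adjMatrix ℝ i j =
      (Fintype.card V : ℝ) ^ 2 - (#{v | f v = some true} : ℝ) ^ 2
        - (#{v | f v = some false} : ℝ) ^ 2 - #{v | f v = none} := by
  let side (b : Bool) (v : V) : ℝ := if f v = some b then 1 else 0
  have hentry : ∀ i j, (apexBipartite f).adjMatrix ℝ i j =
      1 - ∑ b, side b i * side b j - if i = j ∧ f i = none then 1 else 0 := by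
    intro i j
    by_cases hij : i = j
    · subst hij
      rcases h : f i with _ | _ | _ <;> simp [side, h]
    · rcases hi : f i with _ | _ | _ <;> rcases hj : f j with _ | _ | _ <;>
        simp [side, hi, hj, hij, adjMatrix_apply]
  have hsquare : ∀ b, ∑ i, ∑ j, side b i * side b j = (#{v | f v = some b} : ℝ) ^ 2 := fun b => by
    rw [← sum_mul_sum, sq]
    simp [side, sum_boole]
  have hdiag : ∑ i, ∑ j, (if i = j ∧ f i = none then (1 : ℝ) else 0) = #{v | f v = none} := by
    simp [ite_and, sum_boole]
  simp only [hentry, sum_sub_distrib, Fintype.sum_bool, sum_add_distrib, hsquare, hdiag,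
    sum_const, card_univ, nsmul_eq_mul, mul_one]
  ring

lemma card_filter_le_val_lt {n a b : ℕ} (hb : b ≤ n) :
    #{i : Fin n | a ≤ (i : ℕ) ∧ (i : ℕ) < b} = b - a := by
  rw [← card_map Fin.valEmbedding, ← Nat.card_Ico]
  congr 1
  ext x
  simp only [mem_map, mem_filter, mem_univ, true_and, Fin.valEmbedding_apply, mem_Ico]
  exact ⟨fun ⟨i, hi, hix⟩ => hix ▸ hi, fun hx => ⟨⟨x, by omega⟩, hx, rfl⟩⟩

def intervalLabel (n s c : ℕ) (i : Fin n) : Option Bool :=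
  if (i : ℕ) < s then none else some (decide ((i : ℕ) < c))

section IntervalLabel

variable {n s c : ℕ}

lemma card_intervalLabel_none (hsc : s ≤ c) (hcn : c ≤ n) :
    #{i | intervalLabel n s c i = none} = s := by
  convert card_filter_le_val_lt (n := n) (a := 0) (le_trans hsc hcn) using 2 <;> simp [intervalLabel]

lemma card_intervalLabel_some_true (hcn : c ≤ n) :
    #{i | intervalLabel n s c i = some true} = c - s := by
  convert card_filter_le_val_lt (n := n) (a := s) hcn using 2
  simp [intervalLabel]

lemma card_intervalLabel_some_false (hsc : s ≤ c) :
    #{i | intervalLabel n s c i = some false} = n - c := by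
  convert card_filter_le_val_lt (n := n) (a := c) le_rfl using 2
  ext i
  simp only [intervalLabel, Option.ite_none_left_eq_some, not_lt, Option.some.injEq,
    decide_eq_false_iff_not, mem_filter, mem_univ, true_and, Fin.is_lt, and_true]
  omega

end IntervalLabel

lemma le_specRad_apexBipartite_balanced {n s : ℕ} (hsn : s < n) :
    (n : ℝ) / 2 + s - ((s : ℝ) + 1) ^ 2 / (2 * n) ≤
      specRad (apexBipartite (intervalLabel n s (s + (n - s + 1) / 2))) := by
  set c := s + (n - s + 1) / 2
  have hsc : s ≤ c := by omega
  have hcn : c ≤ n := by omega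
  have : Nonempty (Fin n) := ⟨⟨0, by omega⟩⟩
  have hray := sum_adjMatrix_div_card_le_specRad (apexBipartite (intervalLabel n s c))
  rw [sum_adjMatrix_apexBipartite, card_intervalLabel_none hsc hcn,
    card_intervalLabel_some_true hcn, card_intervalLabel_some_false hsc, Fintype.card_fin] at hray
  refine le_trans ?_ hray
  have hn : (0 : ℝ) < n := by exact_mod_cast (show 0 < n by omega)
  have hsides : ((c - s : ℕ) : ℝ) + (n - c : ℕ) = n - s := by
    rw [← Nat.cast_add, ← Nat.cast_sub hsn.le]; congr 1; omega
  have hbalanced : (((c - s : ℕ) : ℝ) - (n - c : ℕ)) ^ 2 ≤ 1 := by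
    have hlow : ((n - c : ℕ) : ℝ) ≤ (c - s : ℕ) := by exact_mod_cast (show n - c ≤ c - s by omega)
    have hup : ((c - s : ℕ) : ℝ) ≤ (n - c : ℕ) + 1 := by
      exact_mod_cast (show c - s ≤ n - c + 1 by omega)
    nlinarith
  -- `a² + b² = ((a + b)² + (a - b)²) / 2 ≤ ((n - s)² + 1) / 2` for the side sizes `a`, `b`
  rw [le_div_iff₀ hn]
  field_simp
  nlinarith

theorem spectral_radius_lower_bound_extremal_general (t l : ℕ) (hl : 1 ≤ l) :
    ∃ n₀ : ℕ, ∀ n : ℕ, n₀ ≤ n →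
      ∀ G : SimpleGraph (Fin n), ¬ ContainsCopy (copies t (cycleGraph (2*l+1))) G →
        specRad G = spex n (copies t (cycleGraph (2*l+1))) →
        (n : ℝ)/2 + ((t : ℝ) - 1) - (t : ℝ)^2/(2*n) ≤ specRad G := by
  refine ⟨t, fun n htn G hG hGspex => ?_⟩
  have ht : 1 ≤ t := by
    by_contra! h0
    obtain rfl : t = 0 := by omega
    exact hG (containsCopy_of_isEmpty _ _)
  set H := apexBipartite (intervalLabel n (t - 1) ((t - 1) + (n - (t - 1) + 1) / 2))
  have hH : ¬ ContainsCopy (copies t (cycleGraph (2*l+1))) H :=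
    not_containsCopy_copies_apexBipartite hl _
      (by rw [card_intervalLabel_none (by omega) (by omega)]; omega)
  have hcast : ((t - 1 : ℕ) : ℝ) = t - 1 := by rw [Nat.cast_sub ht, Nat.cast_one]
  calc (n : ℝ)/2 + ((t : ℝ) - 1) - (t : ℝ)^2/(2*n)
      = n / 2 + (t - 1 : ℕ) - (((t - 1 : ℕ) : ℝ) + 1) ^ 2 / (2 * n) := by rw [hcast]; ring
    _ ≤ specRad H := le_specRad_apexBipartite_balanced (by omega)
    _ ≤ spex n (copies t (cycleGraph (2*l+1))) := specRad_le_spex hH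
    _ = specRad G := hGspex.symm

theorem spectral_radius_lower_bound_extremal (t l : ℕ) (ht : 2 ≤ t) (hl : 1 ≤ l) :
    ∃ n₀ : ℕ, ∀ n : ℕ, n₀ ≤ n →
      ∀ G : SimpleGraph (Fin n), ¬ ContainsCopy (copies t (cycleGraph (2*l+1))) G →
        specRad G = spex n (copies t (cycleGraph (2*l+1))) →
        (n : ℝ)/2 + ((t : ℝ) - 1) - (t : ℝ)^2/(2*n) ≤ specRad G :=
  spectral_radius_lower_bound_extremal_general t l hl
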